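/- arXiv:2003.04433 — 8 statements merged into one kernel-verified Lean document; each statement's English description precedes it below -/
import Mathlib

section
/- Let X₁, …, Xₙ ∈ ℝ^d and define Q := {(ψ(X₁),…,ψ(Xₙ)) : ψ : ℝ^d → ℝ quasiconvex and decreasing}. Then z ∈ Q if and only if z_i ≤ max_{j∈S} z_j for every pair (i, S) with i ∈ [n], S ⊆ [n] nonempty, such that X_i ∈ Cv†({X_j : j ∈ S}). -/
open Finset MeasureTheory

/-- Upper orthant of a set `A ⊆ ℝ^d`. -/
def UpOrth {d : ℕ} (A : Set (Fin d → ℝ)) : Set (Fin d → ℝ) :=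
  {y | ∃ x ∈ A, x ≤ y}

/-- Upper orthant of the convex hull. -/
def CvDag {d : ℕ} (A : Set (Fin d → ℝ)) : Set (Fin d → ℝ) :=
  UpOrth (convexHull ℝ A)

/-- Quasiconvexity: all lower level sets are convex. -/
def QConv {d : ℕ} (ψ : (Fin d → ℝ) → ℝ) : Prop :=
  ∀ α : ℝ, Convex ℝ {x : Fin d → ℝ | ψ x ≤ α}

/-- Coordinatewise decreasing. -/
def Decr {d : ℕ} (ψ : (Fin d → ℝ) → ℝ) : Prop :=
  ∀ x y : Fin d → ℝ, x ≤ y → ψ y ≤ ψ x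

/-!
If `ψ` is quasiconvex and decreasing, its sublevel set `{ψ ≤ max_{j ∈ S} z_j}` is convex and
upward closed and contains every `X_j` with `j ∈ S`, hence contains `Cv†({X_j : j ∈ S})`.
Conversely, the sets `L α = Cv†({X_k : z_k ≤ α})` form a monotone family of convex upward closed
sets, and `ψ x = min {z_j : x ∈ L z_j}` (capped by `max z`) has the sets `L α` as sublevel sets,
so it is quasiconvex and decreasing; `ψ (X_i) ≤ z_i` since `X_i ∈ L z_i`, and the hypothesis
applied to `S = {k : z_k ≤ z_j}` gives the reverse inequality.
-/

section ChainInf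

variable {ι E : Type*} [Fintype ι] (z : ι → ℝ) (L : ℝ → Set E) (C : ℝ)

noncomputable def chainInf (x : E) : ℝ :=
  open Classical in
  (insert C ((univ.filter fun j => x ∈ L (z j)).image z)).inf' (insert_nonempty _ _) id

variable {z L C}

theorem chainInf_le_iff {x : E} {α : ℝ} :
    chainInf z L C x ≤ α ↔ C ≤ α ∨ ∃ j, z j ≤ α ∧ x ∈ L (z j) := by
  classical
  simp only [chainInf, id_eq, inf'_le_iff, mem_insert, mem_image, mem_filter, mem_univ, true_and,
    exists_eq_or_imp, ↓existsAndEq, and_true]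
  exact or_congr_right <| exists_congr fun _ => and_comm

theorem chainInf_le_of_mem {x : E} {j : ι} (hx : x ∈ L (z j)) : chainInf z L C x ≤ z j :=
  chainInf_le_iff.2 (Or.inr ⟨j, le_rfl, hx⟩)

theorem setOf_chainInf_le_of_lt {α : ℝ} (hα : α < C) :
    {x | chainInf z L C x ≤ α} = ⋃ j : {j // z j ≤ α}, L (z j) := by
  ext x
  simp [chainInf_le_iff, hα.not_ge]

theorem convex_setOf_chainInf_le [AddCommGroup E] [Module ℝ E] (hmono : Monotone L)
    (hconv : ∀ α, Convex ℝ (L α)) (α : ℝ) : Convex ℝ {x | chainInf z L C x ≤ α} := by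
  rcases le_or_gt C α with hCα | hαC
  · convert convex_univ
    simp [chainInf_le_iff, hCα]
  rw [setOf_chainInf_le_of_lt hαC]
  refine Directed.convex_iUnion (fun i j => ?_) fun j => hconv _
  rcases le_total (z i) (z j) with h | h
  · exact ⟨j, hmono h, le_rfl⟩
  · exact ⟨i, le_rfl, hmono h⟩

theorem antitone_chainInf [Preorder E] (hupper : ∀ α, IsUpperSet (L α)) :
    Antitone (chainInf z L C) := fun _ _ hxy =>
  chainInf_le_iff.2 <| (chainInf_le_iff.1 le_rfl).imp_right
    fun ⟨j, hj, hx⟩ => ⟨j, hj, hupper _ hxy hx⟩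

end ChainInf

section CvDag

variable {d : ℕ}

theorem convex_cvDag (A : Set (Fin d → ℝ)) : Convex ℝ (CvDag A) := by
  rintro y₁ ⟨x₁, hx₁, hl₁⟩ y₂ ⟨x₂, hx₂, hl₂⟩ a b ha hb hab
  refine ⟨a • x₁ + b • x₂, convex_convexHull ℝ A hx₁ hx₂ ha hb hab, ?_⟩
  gcongr

theorem isUpperSet_cvDag (A : Set (Fin d → ℝ)) : IsUpperSet (CvDag A) :=
  fun _ _ hxy ⟨w, hw, hwx⟩ => ⟨w, hw, hwx.trans hxy⟩

theorem cvDag_mono {A B : Set (Fin d → ℝ)} (h : A ⊆ B) : CvDag A ⊆ CvDag B :=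
  fun _ ⟨x, hx, hle⟩ => ⟨x, convexHull_mono h hx, hle⟩

theorem subset_cvDag (A : Set (Fin d → ℝ)) : A ⊆ CvDag A :=
  fun x hx => ⟨x, subset_convexHull ℝ A hx, le_rfl⟩

theorem QConv.le_of_mem_cvDag {ψ : (Fin d → ℝ) → ℝ} (hψ : QConv ψ) (hψ' : Decr ψ)
    {A : Set (Fin d → ℝ)} {x : Fin d → ℝ} {α : ℝ} (hx : x ∈ CvDag A) (hA : ∀ a ∈ A, ψ a ≤ α) :
    ψ x ≤ α := by
  obtain ⟨y, hy, hyx⟩ := hx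
  exact (hψ' y x hyx).trans (convexHull_min hA (hψ α) hy)

end CvDag

theorem stmt_6 (d n : ℕ) (X : Fin n → (Fin d → ℝ)) (z : Fin n → ℝ) :
    (∃ ψ : (Fin d → ℝ) → ℝ, QConv ψ ∧ Decr ψ ∧ ∀ i, z i = ψ (X i)) ↔
    (∀ (i : Fin n) (S : Finset (Fin n)) (hS : S.Nonempty),
      X i ∈ CvDag (X '' ↑S) → z i ≤ S.sup' hS z) := by
  constructor
  · rintro ⟨ψ, hq, hd, hz⟩ i S hS hX
    refine hz i ▸ hq.le_of_mem_cvDag hd hX ?_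
    rintro _ ⟨j, hj, rfl⟩
    exact hz j ▸ le_sup' z hj
  · intro H
    set L : ℝ → Set (Fin d → ℝ) := fun α => CvDag (X '' {k | z k ≤ α})
    set C := ⨆ j, z j
    have hL_mono : Monotone L := fun _ _ h => cvDag_mono (Set.image_mono fun _ hk => hk.trans h)
    refine ⟨chainInf z L C, convex_setOf_chainInf_le hL_mono (fun _ => convex_cvDag _),
      antitone_chainInf fun _ => isUpperSet_cvDag _, fun i => le_antisymm ?_
      (chainInf_le_of_mem (subset_cvDag _ (Set.mem_image_of_mem X (le_refl (z i)))))⟩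
    rcases chainInf_le_iff.1 (le_refl (chainInf z L C (X i))) with hC | ⟨j, hj, hX⟩
    · exact (le_ciSup (Set.finite_range z).bddAbove i).trans hC
    · classical
      have hS : (univ.filter fun k => z k ≤ z j).Nonempty := ⟨j, by simp⟩
      have hzi := H i _ hS (by simpa [L] using hX)
      exact hzi.trans <| (sup'_le _ _ fun k hk => by simpa using hk).trans hj
end

section
/- Let X₁, …, Xₙ ∈ ℝ^d and define Q̃ := {(ψ(X₁),…,ψ(Xₙ)) : ψ : ℝ^d → ℝ quasiconvex}. Then z ∈ Q̃ if and only if z_i ≤ max_{j∈S} z_j for every pair (i, S) with i ∈ [n], S ⊆ [n] nonempty, such that X_i ∈ Cv({X_j : j ∈ S}). -/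
open Finset MeasureTheory

/-!
Necessity: the sublevel set `{ψ ≤ max_{j ∈ S} z_j}` is convex and contains every `X_j`, `j ∈ S`,
hence all of `Cv({X_j : j ∈ S})`.

Sufficiency: with `K α := Cv({X_j : z_j ≤ α})` and a constant `c ≥ max z`, put
`ψ x := min ({c} ∪ {z_i : x ∈ K (z_i)})`. Since a nonempty `K α` is one of the sets `K (z_i)` with `z_i ≤ α`,
the sublevel set `{ψ ≤ α}` is `K α` for `α < c` and everything otherwise, so `ψ` is quasiconvex;
and the hypothesis says precisely that `X_i ∈ K α` forces `z_i ≤ α`, i.e. `ψ (X_i) = z_i`.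
-/

theorem qConv_iff_quasiconvexOn_univ {d : ℕ} {ψ : (Fin d → ℝ) → ℝ} :
    QConv ψ ↔ QuasiconvexOn ℝ Set.univ ψ := by
  simp [QConv, QuasiconvexOn]

section

variable {E ι : Type*} [AddCommGroup E] [Module ℝ E]

theorem QuasiconvexOn.le_sup'_of_mem_convexHull {ψ : E → ℝ} (hψ : QuasiconvexOn ℝ Set.univ ψ)
    {X : ι → E} {S : Finset ι} (hS : S.Nonempty) {x : E} (hx : x ∈ convexHull ℝ (X '' S)) :
    ψ x ≤ S.sup' hS (ψ ∘ X) := by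
  have hsub : X '' S ⊆ {y | y ∈ Set.univ ∧ ψ y ≤ S.sup' hS (ψ ∘ X)} := by
    rintro _ ⟨j, hj, rfl⟩
    exact ⟨trivial, S.le_sup' (ψ ∘ X) hj⟩
  exact (convexHull_min hsub (hψ _) hx).2

def sublevelHull (X : ι → E) (z : ι → ℝ) (α : ℝ) : Set E :=
  convexHull ℝ (X '' {j | z j ≤ α})

variable {X : ι → E} {z : ι → ℝ}

theorem sublevelHull_mono : Monotone (sublevelHull X z) :=
  fun _ _ hαβ => convexHull_mono (Set.image_mono fun _ hj => le_trans hj hαβ)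

theorem mem_sublevelHull_iff_exists [Finite ι] {x : E} {α : ℝ} :
    x ∈ sublevelHull X z α ↔ ∃ i, x ∈ sublevelHull X z (z i) ∧ z i ≤ α := by
  refine ⟨fun hx => ?_, fun ⟨i, hx, hiα⟩ => sublevelHull_mono hiα hx⟩
  have hne : {j | z j ≤ α}.Nonempty := by
    by_contra h
    simp [sublevelHull, Set.not_nonempty_iff_eq_empty.1 h] at hx
  obtain ⟨i, hiα, hmax⟩ := Set.exists_max_image _ z (Set.toFinite _) hne
  exact ⟨i, convexHull_mono (Set.image_mono hmax) hx, hiα⟩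

theorem le_of_mem_sublevelHull [Fintype ι]
    (H : ∀ (i : ι) (S : Finset ι) (hS : S.Nonempty), X i ∈ convexHull ℝ (X '' ↑S) →
      z i ≤ S.sup' hS z)
    {i : ι} {α : ℝ} (hi : X i ∈ sublevelHull X z α) : z i ≤ α := by
  classical
  set S := univ.filter fun j => z j ≤ α
  have hS : (S : Set ι) = {j | z j ≤ α} := by ext; simp [S]
  have hSne : S.Nonempty := by
    by_contra h
    simp [sublevelHull, ← hS, Finset.not_nonempty_iff_eq_empty.1 h] at hi
  exact (H i S hSne (hS ▸ hi)).trans (S.sup'_le hSne z fun j hj => (mem_filter.1 hj).2)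

noncomputable def quasiconvexExtension [Fintype ι] (X : ι → E) (z : ι → ℝ) (c : ℝ) (x : E) : ℝ :=
  open Classical in
  (insert c ((univ.filter fun i => x ∈ sublevelHull X z (z i)).image z)).inf'
    (insert_nonempty _ _) id

variable [Fintype ι]

theorem quasiconvexExtension_le_iff {c : ℝ} {x : E} {α : ℝ} :
    quasiconvexExtension X z c x ≤ α ↔ c ≤ α ∨ x ∈ sublevelHull X z α := by
  classical
  rw [mem_sublevelHull_iff_exists]
  simp only [quasiconvexExtension, inf'_le_iff, exists_mem_insert, exists_mem_image, mem_filter,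
    mem_univ, true_and, id]

theorem quasiconvexOn_quasiconvexExtension (c : ℝ) :
    QuasiconvexOn ℝ Set.univ (quasiconvexExtension X z c) := by
  intro α
  by_cases hcα : c ≤ α
  · convert convex_univ (𝕜 := ℝ) (E := E)
    simp [quasiconvexExtension_le_iff, hcα]
  · convert convex_convexHull ℝ (X '' {j | z j ≤ α})
    simp [quasiconvexExtension_le_iff, hcα, sublevelHull]

theorem quasiconvexExtension_apply {c : ℝ} (hc : ∀ i, z i ≤ c)
    (H : ∀ (i : ι) (S : Finset ι) (hS : S.Nonempty), X i ∈ convexHull ℝ (X '' ↑S) →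
      z i ≤ S.sup' hS z)
    (i : ι) : quasiconvexExtension X z c (X i) = z i := by
  refine le_antisymm (quasiconvexExtension_le_iff.2 <| .inr ?_) ?_
  · exact subset_convexHull ℝ _ ⟨i, le_refl (z i), rfl⟩
  · rcases (quasiconvexExtension_le_iff (X := X) (z := z) (c := c)).1 le_rfl with hcψ | hmem
    · exact (hc i).trans hcψ
    · exact le_of_mem_sublevelHull H hmem

end

theorem stmt_7 (d n : ℕ) (X : Fin n → (Fin d → ℝ)) (z : Fin n → ℝ) :
    (∃ ψ : (Fin d → ℝ) → ℝ, QConv ψ ∧ ∀ i, z i = ψ (X i)) ↔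
    (∀ (i : Fin n) (S : Finset (Fin n)) (hS : S.Nonempty),
      X i ∈ convexHull ℝ (X '' ↑S) → z i ≤ S.sup' hS z) := by
  constructor
  · rintro ⟨ψ, hψ, hz⟩ i S hS hX
    obtain rfl : z = ψ ∘ X := funext hz
    exact (qConv_iff_quasiconvexOn_univ.1 hψ).le_sup'_of_mem_convexHull hS hX
  · intro H
    obtain ⟨c, hc⟩ := (Set.finite_range z).bddAbove
    exact ⟨quasiconvexExtension X z c,
      qConv_iff_quasiconvexOn_univ.2 (quasiconvexOn_quasiconvexExtension c),
      fun i => (quasiconvexExtension_apply (fun i => hc (Set.mem_range_self i)) H i).symm⟩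
end

section
/- (Secondary characterization, quasiconvex-decreasing case.) Let X₁,…,Xₙ ∈ ℝ^d and Q := {(ψ(X₁),…,ψ(Xₙ)) : ψ quasiconvex and decreasing}. Then z ∈ Q if and only if there exist vectors ξ₁,…,ξₙ ∈ ℝ^d with ξ_j ≥ 0 coordinatewise for all j, such that ξ_jᵀ(X_i − X_j) > 0 whenever z_i < z_j. -/
open Finset MeasureTheory

/-!
(⇒) For each `j`, the points `X i` with `z i < z j` lie in the strict sublevel set `{ψ < z j}`,
a convex upper set that misses `X j`. Hence `X j` lies outside the closed convex upper set
`upperClosure (convexHull …)`, and a functional strictly separating them is nonnegative because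
the set is upward closed; its coefficients form `ξ j`.

(⇐) Take `ψ x` to be the largest `z j` with `ξ j ⬝ᵥ (x - X j) ≤ 0` (floored by `min z`). Its
sublevel set at `α` is the intersection of the open halfspaces `ξ j ⬝ᵥ (x - X j) > 0` over
`z j > α`, so `ψ` is quasiconvex; it is decreasing as `ξ j ≥ 0`; and the separation hypothesis
says exactly that no `j` with `z j > z i` is counted at `X i`, so `ψ (X i) = z i`.
-/

open Matrix

theorem Convex.upperClosure {E : Type*} [AddCommGroup E] [PartialOrder E]
    [IsOrderedAddMonoid E] [Module ℝ E] [PosSMulMono ℝ E] {s : Set E} (hs : Convex ℝ s) :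
    Convex ℝ (upperClosure s : Set E) := by
  rintro x ⟨x', hx', hx'x⟩ y ⟨y', hy', hy'y⟩ a b ha hb hab
  exact ⟨a • x' + b • y', hs hx' hy' ha hb hab,
    add_le_add (smul_le_smul_of_nonneg_left hx'x ha) (smul_le_smul_of_nonneg_left hy'y hb)⟩

theorem AddMonoidHom.nonneg_of_forall_lt_on_isUpperSet {E : Type*} [AddCommGroup E]
    [PartialOrder E] [IsOrderedAddMonoid E] (f : E →+ ℝ) {s : Set E} (hs : IsUpperSet s)
    {x : E} (hx : x ∈ s) {u : ℝ} (hu : ∀ y ∈ s, u < f y) {v : E} (hv : 0 ≤ v) : 0 ≤ f v := by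
  by_contra! hfv
  obtain ⟨m, hm⟩ := exists_nat_gt ((f x - u) / -f v)
  have hxm : x + m • v ∈ s := hs (le_add_of_nonneg_right (nsmul_nonneg hv m)) hx
  have hlt := hu _ hxm
  rw [div_lt_iff₀ (neg_pos.2 hfv)] at hm
  rw [map_add, map_nsmul, nsmul_eq_mul] at hlt
  linarith

theorem LinearMap.apply_eq_dotProduct {ι : Type*} [Fintype ι] [DecidableEq ι]
    (f : (ι → ℝ) →ₗ[ℝ] ℝ) (x : ι → ℝ) : f x = (fun i => f (Pi.single i 1)) ⬝ᵥ x := by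
  conv_lhs => rw [pi_eq_sum_univ' x]
  simp only [map_sum, map_smul, smul_eq_mul, dotProduct, mul_comm]

theorem exists_nonneg_dotProduct_lt_of_notMem_upperClosure_convexHull {ι : Type*} [Fintype ι]
    {A : Set (ι → ℝ)} (hA : A.Finite) {x : ι → ℝ}
    (hx : x ∉ upperClosure (convexHull ℝ A)) :
    ∃ ξ : ι → ℝ, 0 ≤ ξ ∧ ∀ a ∈ A, ξ ⬝ᵥ x < ξ ⬝ᵥ a := by
  classical
  rcases A.eq_empty_or_nonempty with rfl | ⟨a₀, ha₀⟩
  · exact ⟨0, le_rfl, by simp⟩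
  have hK : IsCompact (convexHull ℝ A) := hA.isCompact_convexHull ℝ
  have hclosed : IsClosed (upperClosure (convexHull ℝ A) : Set (ι → ℝ)) :=
    hK.isClosed.upperClosure_pi hK.isBounded.bddBelow
  obtain ⟨f, u, hfx, hfu⟩ := geometric_hahn_banach_point_closed
    (convex_convexHull ℝ A).upperClosure hclosed hx
  have hmem : ∀ a ∈ A, a ∈ (upperClosure (convexHull ℝ A) : Set (ι → ℝ)) :=
    fun a ha => subset_upperClosure (subset_convexHull ℝ A ha)
  set ξ : ι → ℝ := fun i => f (Pi.single i 1)
  have hf : ∀ y, f y = ξ ⬝ᵥ y := f.toLinearMap.apply_eq_dotProduct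
  refine ⟨ξ, fun i => ?_, fun a ha => ?_⟩
  · exact f.toLinearMap.toAddMonoidHom.nonneg_of_forall_lt_on_isUpperSet (upperClosure _).upper
      (hmem a₀ ha₀) hfu (Pi.single_nonneg.2 zero_le_one)
  · rw [← hf, ← hf]
    exact hfx.trans (hfu a (hmem a ha))

theorem QConv.convex_setOf_lt {d : ℕ} {ψ : (Fin d → ℝ) → ℝ} (hψ : QConv ψ) (r : ℝ) :
    Convex ℝ {x | ψ x < r} := by
  have : QuasiconvexOn ℝ Set.univ ψ := fun α => by simpa using hψ α
  simpa using this.convex_lt r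

theorem Decr.isUpperSet_setOf_lt {d : ℕ} {ψ : (Fin d → ℝ) → ℝ} (hψ : Decr ψ) (r : ℝ) :
    IsUpperSet {x | ψ x < r} :=
  fun x y hxy hx => (hψ x y hxy).trans_lt hx

theorem notMem_upperClosure_convexHull_of_lt {d : ℕ} {ψ : (Fin d → ℝ) → ℝ} (hq : QConv ψ)
    (hd : Decr ψ) {s : Set (Fin d → ℝ)} {x : Fin d → ℝ} (hs : ∀ y ∈ s, ψ y < ψ x) :
    x ∉ upperClosure (convexHull ℝ s) := fun hx =>
  lt_irrefl (ψ x) <| upperClosure_min (convexHull_min hs (hq.convex_setOf_lt _))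
    (hd.isUpperSet_setOf_lt _) hx

section Interpolant

variable {ι J : Type*} [Fintype ι] [Fintype J]

noncomputable def halfspaceInterpolant (X ξ : J → ι → ℝ) (z : J → ℝ) (c : ℝ) (x : ι → ℝ) : ℝ :=
  (insert c ((univ.filter fun j => ξ j ⬝ᵥ (x - X j) ≤ 0).image z)).max' (insert_nonempty _ _)

variable {X ξ : J → ι → ℝ} {z : J → ℝ} {c : ℝ}

theorem halfspaceInterpolant_le_iff {x : ι → ℝ} {α : ℝ} :
    halfspaceInterpolant X ξ z c x ≤ α ↔ c ≤ α ∧ ∀ j, ξ j ⬝ᵥ (x - X j) ≤ 0 → z j ≤ α := by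
  simp [halfspaceInterpolant, max'_le_iff]

theorem quasiconvexOn_halfspaceInterpolant :
    QuasiconvexOn ℝ Set.univ (halfspaceInterpolant X ξ z c) := by
  rintro α x ⟨-, hx⟩ y ⟨-, hy⟩ a b ha hb hab
  refine ⟨trivial, ?_⟩
  rw [halfspaceInterpolant_le_iff] at hx hy ⊢
  refine ⟨hx.1, fun j hj => ?_⟩
  by_contra hzj
  have hxj : 0 < ξ j ⬝ᵥ (x - X j) := lt_of_not_ge (mt (hx.2 j) hzj)
  have hyj : 0 < ξ j ⬝ᵥ (y - X j) := lt_of_not_ge (mt (hy.2 j) hzj)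
  have hsplit : a • x + b • y - X j = a • (x - X j) + b • (y - X j) := by
    obtain rfl : b = 1 - a := by linarith
    module
  rw [hsplit, dotProduct_add, dotProduct_smul, dotProduct_smul] at hj
  exact hj.not_gt (convex_Ioi (0 : ℝ) hxj hyj ha hb hab)

theorem antitone_halfspaceInterpolant (hξ : ∀ j, 0 ≤ ξ j) :
    Antitone (halfspaceInterpolant X ξ z c) := by
  intro x y hxy
  obtain ⟨hc, hx⟩ := halfspaceInterpolant_le_iff.1 (le_refl (halfspaceInterpolant X ξ z c x))
  refine halfspaceInterpolant_le_iff.2 ⟨hc, fun j hj => hx j (le_trans ?_ hj)⟩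
  exact dotProduct_le_dotProduct_of_nonneg_left (sub_le_sub_right hxy _) (hξ j)

theorem halfspaceInterpolant_apply (hc : ∀ j, c ≤ z j)
    (hsep : ∀ i j, z i < z j → 0 < ξ j ⬝ᵥ (X i - X j)) (i : J) :
    halfspaceInterpolant X ξ z c (X i) = z i := by
  refine le_antisymm (halfspaceInterpolant_le_iff.2 ⟨hc i, fun j hj => ?_⟩) ?_
  · exact not_lt.1 fun hij => (hsep i j hij).not_ge hj
  · exact (halfspaceInterpolant_le_iff.1 le_rfl).2 i (by simp)

end Interpolant

theorem stmt_8 (d n : ℕ) (X : Fin n → (Fin d → ℝ)) (z : Fin n → ℝ) :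
    (∃ ψ : (Fin d → ℝ) → ℝ, QConv ψ ∧ Decr ψ ∧ ∀ i, z i = ψ (X i)) ↔
    (∃ ξ : Fin n → (Fin d → ℝ), (∀ j, 0 ≤ ξ j) ∧
      ∀ i j, z i < z j → 0 < ∑ k, ξ j k * (X i k - X j k)) := by
  change _ ↔ ∃ ξ : Fin n → (Fin d → ℝ), (∀ j, 0 ≤ ξ j) ∧ ∀ i j, z i < z j → 0 < ξ j ⬝ᵥ (X i - X j)
  constructor
  · rintro ⟨ψ, hq, hd, hz⟩
    have hsep : ∀ j, ∃ ξ : Fin d → ℝ, 0 ≤ ξ ∧ ∀ a ∈ X '' {i | z i < z j}, ξ ⬝ᵥ X j < ξ ⬝ᵥ a :=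
      fun j => exists_nonneg_dotProduct_lt_of_notMem_upperClosure_convexHull (Set.toFinite _)
        (notMem_upperClosure_convexHull_of_lt hq hd (by rintro _ ⟨i, hi, rfl⟩; simpa [hz] using hi))
    choose ξ hξ hsep using hsep
    refine ⟨ξ, hξ, fun i j hij => ?_⟩
    rw [dotProduct_sub, sub_pos]
    exact hsep j _ ⟨i, hij, rfl⟩
  · rintro ⟨ξ, hξ, hsep⟩
    refine ⟨halfspaceInterpolant X ξ z (⨅ i, z i), fun α => ?_,
      fun x y hxy => antitone_halfspaceInterpolant hξ hxy, fun i => ?_⟩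
    · simpa using quasiconvexOn_halfspaceInterpolant α
    · exact (halfspaceInterpolant_apply (ciInf_le (Finite.bddBelow_range z)) hsep i).symm
end

section
/- For n = 3 design points X₁ = (1,0), X₂ = (0.75, 0.75), X₃ = (0,1) in ℝ², the constraint set Q := {(ψ(X₁),ψ(X₂),ψ(X₃)) : ψ quasiconvex and decreasing} equals {z ∈ ℝ³ : z₂ ≤ max(z₁, z₃)}, and both (0.5, 0.5, 0) and (0, 0.5, 0.5) are Euclidean projections of the point (0, 1, 0) onto Q. In particular Q is not convex and Euclidean projection onto Q need not be unique. -/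
open Finset MeasureTheory

/-!
A decreasing quasiconvex `ψ` satisfies `ψ w ≤ max (ψ x) (ψ y)` whenever `w` dominates a convex
combination of `x` and `y`; as `X₂ ≥ (X₁ + X₃) / 2`, this forces `z₂ ≤ max z₁ z₃`.

Conversely, values `z` at points `X` are interpolated as soon as no `X j` lies in
`CvDag {X i | z i < z j}`: the maximum over `j` of the step functions equal to `min z` on this
convex upper set and to `z j` off it is quasiconvex, decreasing, and takes the value `z j` at `X j`.
For the three design points that condition is `z₂ ≤ max z₁ z₃`, each instance being witnessed by a
coordinate half-plane. For the projection, `w₂ ≤ w₁` gives `w₁² + (1 - w₂)² ≥ 1/2`, and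
`(1, 1, 0)`, `(0, 1, 1)` have their midpoint outside the set.
-/

variable {d : ℕ}

theorem QConv.le_max {ψ : (Fin d → ℝ) → ℝ} (hψ : QConv ψ) {x y : Fin d → ℝ} {a b : ℝ}
    (ha : 0 ≤ a) (hb : 0 ≤ b) (hab : a + b = 1) :
    ψ (a • x + b • y) ≤ max (ψ x) (ψ y) :=
  hψ _ (le_max_left (ψ x) (ψ y)) (le_max_right (ψ x) (ψ y)) ha hb hab

theorem qConv_ite_mem {U : Set (Fin d → ℝ)} [DecidablePred (· ∈ U)]
    (hU : Convex ℝ U) {lo hi : ℝ} (h : lo ≤ hi) :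
    QConv fun x => if x ∈ U then lo else hi := by
  intro α
  by_cases hhi : hi ≤ α
  · convert convex_univ (𝕜 := ℝ) (E := Fin d → ℝ)
    ext x
    simp only [Set.mem_ofPred_eq, Set.mem_univ, iff_true]
    split_ifs <;> linarith
  by_cases hlo : lo ≤ α
  · convert hU
    ext x
    simp only [Set.mem_ofPred_eq]
    split_ifs with hx <;> simp [*]
  · convert convex_empty (𝕜 := ℝ) (E := Fin d → ℝ)
    ext x
    simp only [Set.mem_ofPred_eq, Set.mem_empty_iff_false, iff_false]
    split_ifs <;> assumption

theorem decr_ite_mem {U : Set (Fin d → ℝ)} [DecidablePred (· ∈ U)]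
    (hU : IsUpperSet U) {lo hi : ℝ} (h : lo ≤ hi) :
    Decr fun x => if x ∈ U then lo else hi := by
  intro x y hxy
  by_cases hx : x ∈ U
  · simp [hx, hU hxy hx]
  · dsimp only
    rw [if_neg hx]
    split_ifs <;> linarith

theorem QConv.ciSup {ι : Type*} [Finite ι] [Nonempty ι] {ψ : ι → (Fin d → ℝ) → ℝ}
    (hψ : ∀ i, QConv (ψ i)) : QConv fun x => ⨆ i, ψ i x := by
  intro α
  simp only [ciSup_le_iff (Set.finite_range _).bddAbove, Set.ofPred_forall]
  exact convex_iInter fun i => hψ i α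

theorem Decr.ciSup {ι : Type*} [Finite ι] [Nonempty ι] {ψ : ι → (Fin d → ℝ) → ℝ}
    (hψ : ∀ i, Decr (ψ i)) : Decr fun x => ⨆ i, ψ i x :=
  fun x y hxy => ciSup_mono (Set.finite_range _).bddAbove fun i => hψ i x y hxy

theorem notMem_cvDag_of_apply_lt {A : Set (Fin d → ℝ)} {k : Fin d} {c : ℝ} {x : Fin d → ℝ}
    (hA : ∀ a ∈ A, c ≤ a k) (hx : x k < c) : x ∉ CvDag A := by
  rintro ⟨p, hp, hpx⟩
  have hconv : Convex ℝ {x : Fin d → ℝ | c ≤ x k} :=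
    convex_halfSpace_ge (LinearMap.proj (R := ℝ) (φ := fun _ : Fin d => ℝ) k).isLinear c
  exact hx.not_ge (le_trans (convexHull_min hA hconv hp) (hpx k))

theorem Decr.apply_le_max {ψ : (Fin d → ℝ) → ℝ} (hd : Decr ψ) (hq : QConv ψ)
    {x y w : Fin d → ℝ} {a b : ℝ} (ha : 0 ≤ a) (hb : 0 ≤ b) (hab : a + b = 1)
    (hw : a • x + b • y ≤ w) : ψ w ≤ max (ψ x) (ψ y) :=
  (hd _ _ hw).trans (hq.le_max ha hb hab)

theorem exists_qConv_decr_of_forall_notMem_cvDag {ι : Type*} [Finite ι] [Nonempty ι]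
    (X : ι → Fin d → ℝ) (z : ι → ℝ) (h : ∀ j, X j ∉ CvDag (X '' {i | z i < z j})) :
    ∃ ψ : (Fin d → ℝ) → ℝ, QConv ψ ∧ Decr ψ ∧ ∀ i, z i = ψ (X i) := by
  classical
  let m := ⨅ i, z i
  have hm : ∀ i, m ≤ z i := ciInf_le (Set.finite_range z).bddBelow
  refine ⟨fun x => ⨆ j, if x ∈ CvDag (X '' {i | z i < z j}) then m else z j,
    QConv.ciSup fun j => qConv_ite_mem (convex_cvDag _) (hm j),
    Decr.ciSup fun j => decr_ite_mem (isUpperSet_cvDag _) (hm j), fun i => ?_⟩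
  refine le_antisymm ?_ (ciSup_le fun j => ?_)
  · exact le_ciSup_of_le (Set.finite_range _).bddAbove i (by simp [h i])
  · split_ifs with hij
    · exact hm i
    · exact not_lt.1 fun hlt => hij (subset_cvDag _ ⟨i, hlt, rfl⟩)

abbrev designPoints : Fin 3 → Fin 2 → ℝ := ![![(1 : ℝ), 0], ![0.75, 0.75], ![0, 1]]

theorem designPoints_notMem_cvDag {z : Fin 3 → ℝ} (hz : z 1 ≤ max (z 0) (z 2)) (j : Fin 3) :
    designPoints j ∉ CvDag (designPoints '' {i | z i < z j}) := by
  fin_cases j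
  · refine notMem_cvDag_of_apply_lt (k := 1) (c := 3/4) ?_ (by norm_num)
    rintro _ ⟨i, hi, rfl⟩
    fin_cases i <;> simp at hi ⊢ <;> norm_num
  · rcases le_max_iff.1 hz with h0 | h2
    · refine notMem_cvDag_of_apply_lt (k := 1) (c := 1) ?_ (by norm_num)
      rintro _ ⟨i, hi, rfl⟩
      fin_cases i <;> simp at hi ⊢
      linarith
    · refine notMem_cvDag_of_apply_lt (k := 0) (c := 1) ?_ (by norm_num)
      rintro _ ⟨i, hi, rfl⟩
      fin_cases i <;> simp at hi ⊢
      linarith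
  · refine notMem_cvDag_of_apply_lt (k := 0) (c := 3/4) ?_ (by norm_num)
    rintro _ ⟨i, hi, rfl⟩
    fin_cases i <;> simp at hi ⊢ <;> norm_num

theorem half_le_sum_sq_sub {w : Fin 3 → ℝ} (hw : w 1 ≤ max (w 0) (w 2)) :
    1 / 2 ≤ ∑ k, (![(0 : ℝ), 1, 0] k - w k) ^ 2 := by
  simp only [Fin.sum_univ_three, Matrix.cons_val_zero, Matrix.cons_val_one, Matrix.cons_val_two,
    Matrix.head_cons, Matrix.tail_cons]
  rcases le_max_iff.1 hw with h | h
  · nlinarith [sq_nonneg (w 0 + w 1 - 1), sq_nonneg (w 2)]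
  · nlinarith [sq_nonneg (w 2 + w 1 - 1), sq_nonneg (w 0)]

theorem not_convex_setOf_le_max :
    ¬ Convex ℝ {z : Fin 3 → ℝ | z 1 ≤ max (z 0) (z 2)} := by
  intro hC
  have := hC (x := ![1, 1, 0]) (y := ![0, 1, 1]) (by simp) (by simp)
    (by norm_num : (0 : ℝ) ≤ 1 / 2) (by norm_num : (0 : ℝ) ≤ 1 / 2) (by norm_num)
  norm_num [Matrix.cons_val_two] at this

theorem stmt_11 :
    {z : Fin 3 → ℝ | ∃ ψ : (Fin 2 → ℝ) → ℝ, QConv ψ ∧ Decr ψ ∧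
        ∀ i, z i = ψ (![![(1 : ℝ), 0], ![0.75, 0.75], ![0, 1]] i)} =
      {z : Fin 3 → ℝ | z 1 ≤ max (z 0) (z 2)} ∧
    (∀ p ∈ ({![(0.5 : ℝ), 0.5, 0], ![0, 0.5, 0.5]} : Set (Fin 3 → ℝ)),
      p ∈ {z : Fin 3 → ℝ | z 1 ≤ max (z 0) (z 2)} ∧
      ∀ w ∈ {z : Fin 3 → ℝ | z 1 ≤ max (z 0) (z 2)},
        ∑ k, (![(0 : ℝ), 1, 0] k - p k) ^ 2 ≤ ∑ k, (![(0 : ℝ), 1, 0] k - w k) ^ 2) ∧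
    ¬ Convex ℝ {z : Fin 3 → ℝ | z 1 ≤ max (z 0) (z 2)} := by
  refine ⟨?_, fun p hp => ?_, not_convex_setOf_le_max⟩
  · ext z
    refine ⟨fun ⟨ψ, hq, hd, hz⟩ => ?_,
      fun hz => exists_qConv_decr_of_forall_notMem_cvDag _ z (designPoints_notMem_cvDag hz)⟩
    have hmid : (1 / 2 : ℝ) • designPoints 0 + (1 / 2 : ℝ) • designPoints 2 ≤ designPoints 1 := by
      intro k
      fin_cases k <;> simp <;> norm_num
    simpa only [Set.mem_ofPred_eq, hz] using hd.apply_le_max hq (by norm_num) (by norm_num)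
      (by norm_num) hmid
  · rcases hp with rfl | rfl <;>
      exact ⟨by simp, fun w hw => le_of_eq_of_le (by simp [Fin.sum_univ_three]; norm_num)
        (half_le_sum_sq_sub hw)⟩
end

section
/- Let K ⊆ ℝⁿ be a closed set. Then the set of points u ∈ ℝⁿ whose Euclidean projection onto K is not unique has Lebesgue measure zero. Consequently, if Y ∈ ℝⁿ is a random vector with a density with respect to the Lebesgue measure on ℝⁿ, then the minimizer of z ↦ ‖Y − z‖₂² over K is unique with probability 1. -/
/-!
Where `v ↦ infDist v K` is differentiable at `u`, the nearest point of `K` to `u` is unique: for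
any nearest point `z`, the function `‖v - z‖² - infDist v K ²` is nonnegative and vanishes at `u`,
so the derivative of `infDist · K ²` at `u` is `2 ⟪u - z, ·⟫`, which determines `z`. Since
`infDist · K` is `1`-Lipschitz, Rademacher's theorem makes it differentiable almost everywhere.
-/

open Finset MeasureTheory

open Metric WithLp

def IsNearest {α : Type*} [PseudoMetricSpace α] (K : Set α) (u z : α) : Prop :=
  z ∈ K ∧ ∀ w ∈ K, dist u z ≤ dist u w

section IsNearest

variable {α : Type*} [PseudoMetricSpace α] {K : Set α} {u z : α}

theorem IsNearest.infDist_eq (hz : IsNearest K u z) : infDist u K = dist u z :=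
  le_antisymm (infDist_le_dist_of_mem hz.1) ((le_infDist ⟨z, hz.1⟩).2 hz.2)

theorem IsClosed.exists_isNearest [ProperSpace α] (hK : IsClosed K) (hne : K.Nonempty) (u : α) :
    ∃ z, IsNearest K u z := by
  obtain ⟨z, hzK, hz⟩ := hK.exists_infDist_eq_dist hne u
  exact ⟨z, hzK, fun w hw => hz ▸ infDist_le_dist_of_mem hw⟩

end IsNearest

section InnerProductSpace

variable {E : Type*} [NormedAddCommGroup E] [InnerProductSpace ℝ E] {K : Set E} {u : E}

theorem IsNearest.fderiv_infDist_sq {z : E} (hz : IsNearest K u z)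
    (hd : DifferentiableAt ℝ (fun v => infDist v K) u) :
    fderiv ℝ (fun v => infDist v K ^ 2) u = (2 : ℝ) • innerSL ℝ (u - z) := by
  have hmin : IsLocalMin (fun v => ‖v - z‖ ^ 2 - infDist v K ^ 2) u := by
    refine Filter.Eventually.of_forall fun v => ?_
    have hv : infDist v K ≤ ‖v - z‖ := dist_eq_norm v z ▸ infDist_le_dist_of_mem hz.1
    show ‖u - z‖ ^ 2 - infDist u K ^ 2 ≤ ‖v - z‖ ^ 2 - infDist v K ^ 2
    rw [hz.infDist_eq, dist_eq_norm, sub_self]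
    nlinarith [infDist_nonneg (x := v) (s := K)]
  have hsq : HasFDerivAt (fun v => infDist v K ^ 2) (fderiv ℝ (fun v => infDist v K ^ 2) u) u :=
    (hd.pow 2).hasFDerivAt
  have hzero := hmin.hasFDerivAt_eq_zero (((hasFDerivAt_id u).sub_const z).norm_sq.sub hsq)
  rw [← sub_eq_zero.mp hzero]
  ext
  simp

theorem IsNearest.eq_of_differentiableAt {z₀ z₁ : E} (hz₀ : IsNearest K u z₀)
    (hz₁ : IsNearest K u z₁) (hd : DifferentiableAt ℝ (fun v => infDist v K) u) : z₀ = z₁ := by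
  have h := (hz₀.fderiv_infDist_sq hd).symm.trans (hz₁.fderiv_infDist_sq hd)
  exact sub_right_injective (innerSL_inj.mp (smul_right_injective _ two_ne_zero h))

theorem existsUnique_isNearest_of_differentiableAt [ProperSpace E] (hK : IsClosed K)
    (hne : K.Nonempty) (hd : DifferentiableAt ℝ (fun v => infDist v K) u) :
    ∃! z, IsNearest K u z := by
  obtain ⟨z, hz⟩ := hK.exists_isNearest hne u
  exact ⟨z, hz, fun y hy => hy.eq_of_differentiableAt hz hd⟩

theorem ae_existsUnique_isNearest [FiniteDimensional ℝ E] [MeasurableSpace E] [BorelSpace E]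
    (μ : Measure E) [μ.IsAddHaarMeasure] (hK : IsClosed K) (hne : K.Nonempty) :
    ∀ᵐ u ∂μ, ∃! z, IsNearest K u z :=
  (lipschitz_infDist_pt K).ae_differentiableAt.mono fun _ hd =>
    existsUnique_isNearest_of_differentiableAt hK hne hd

end InnerProductSpace

theorem sum_sq_sub_eq_dist_toLp_sq {ι : Type*} [Fintype ι] (u z : ι → ℝ) :
    ∑ k, (u k - z k) ^ 2 = dist (toLp 2 u) (toLp 2 z) ^ 2 := by
  simp [EuclideanSpace.dist_sq_eq, Real.dist_eq, sq_abs]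

theorem isNearest_toLp_iff {ι : Type*} [Fintype ι] (K : Set (ι → ℝ)) (u z : ι → ℝ) :
    IsNearest (ofLp ⁻¹' K : Set (EuclideanSpace ℝ ι)) (toLp 2 u) (toLp 2 z) ↔
      z ∈ K ∧ ∀ w ∈ K, ∑ k, (u k - z k) ^ 2 ≤ ∑ k, (u k - w k) ^ 2 := by
  simp only [IsNearest, Set.mem_preimage, sum_sq_sub_eq_dist_toLp_sq,
    pow_le_pow_iff_left₀ dist_nonneg dist_nonneg two_ne_zero]
  exact and_congr_right fun _ => ⟨fun h w hw => h (toLp 2 w) hw, fun h w hw => h (ofLp w) hw⟩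

theorem stmt_12 (n : ℕ) (K : Set (Fin n → ℝ)) (hK : IsClosed K)
    (hK' : K.Nonempty) :
    volume {u : Fin n → ℝ |
        ¬ ∃! z, z ∈ K ∧ ∀ w ∈ K, ∑ k, (u k - z k) ^ 2 ≤ ∑ k, (u k - w k) ^ 2} = 0 ∧
    ∀ μ : Measure (Fin n → ℝ), μ ≪ volume →
      μ {u : Fin n → ℝ |
          ¬ ∃! z, z ∈ K ∧ ∀ w ∈ K,
            ∑ k, (u k - z k) ^ 2 ≤ ∑ k, (u k - w k) ^ 2} = 0 := by
  have hK_euclid : IsClosed (ofLp ⁻¹' K : Set (EuclideanSpace ℝ (Fin n))) :=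
    hK.preimage (PiLp.continuous_ofLp 2 _)
  have hne_euclid : (ofLp ⁻¹' K : Set (EuclideanSpace ℝ (Fin n))).Nonempty :=
    hK'.preimage (WithLp.equiv 2 _).surjective
  have hae : ∀ᵐ u : Fin n → ℝ,
      ∃! z, z ∈ K ∧ ∀ w ∈ K, ∑ k, (u k - z k) ^ 2 ≤ ∑ k, (u k - w k) ^ 2 := by
    filter_upwards [(PiLp.volume_preserving_toLp (Fin n)).quasiMeasurePreserving.ae
      (ae_existsUnique_isNearest volume hK_euclid hne_euclid)] with u hu
    exact ((WithLp.equiv 2 _).symm.existsUnique_congr (isNearest_toLp_iff K u · |>.symm)).mpr hu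
  have hvol := ae_iff.mp hae
  exact ⟨hvol, fun μ hμ => hμ hvol⟩
end

section
/- Algorithm validity: a point z ∈ ℝⁿ satisfies z_i ≤ max_{j∈S} z_j for all pairs (i,S) with X_i ∈ Cv†({X_j : j ∈ S}) (i.e., z lies in the constraint set Q) if and only if for every i ∈ [n], X_i ∉ Cv†({X_j : z_j < z_i}). In other words, it suffices to check only the n subsets S_i = {j : z_j < z_i}. -/
open Finset MeasureTheory

/-!
A constraint `(i, S)` can only be violated when `max_{j ∈ S} z_j < z_i`, i.e. when `S` lies in
`S_i = {j | z_j < z_i}`. Since `S ↦ X_i ∈ Cv†(X '' S)` is monotone and false at `∅`, all such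
constraints hold as soon as the single largest one, `S = S_i`, does.
-/

theorem CvDag_mono {d : ℕ} {A B : Set (Fin d → ℝ)} (h : A ⊆ B) : CvDag A ⊆ CvDag B :=
  fun _ ⟨x, hx, hxy⟩ => ⟨x, convexHull_mono h hx, hxy⟩

@[simp]
theorem CvDag_empty {d : ℕ} : CvDag (∅ : Set (Fin d → ℝ)) = ∅ := by
  simp [CvDag, UpOrth]

theorem forall_le_sup'_iff_not_strictLowerSet {ι α : Type*} [Fintype ι] [LinearOrder α]
    {P : Set ι → Prop} (hP : Monotone P) (hP₀ : ¬ P ∅) (z : ι → α) (a : α) :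
    (∀ (S : Finset ι) (hS : S.Nonempty), P S → a ≤ S.sup' hS z) ↔ ¬ P {j | z j < a} := by
  constructor
  · intro h hPa
    set S : Finset ι := univ.filter (z · < a) with hS_def
    have hS_coe : (S : Set ι) = {j | z j < a} := by ext; simp [hS_def]
    rcases S.eq_empty_or_nonempty with hS | hS
    · rw [← hS_coe, hS, coe_empty] at hPa
      exact hP₀ hPa
    · have hsup : S.sup' hS z < a := (sup'_lt_iff hS).2 fun j hj => by simpa [hS_def] using hj
      exact (h S hS (hS_coe ▸ hPa)).not_gt hsup
  · intro h S hS hPS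
    by_contra! hsup
    exact h (hP (fun j hj => (le_sup' z hj).trans_lt hsup) hPS)

theorem stmt_13 (d n : ℕ) (X : Fin n → (Fin d → ℝ)) (z : Fin n → ℝ) :
    (∀ (i : Fin n) (S : Finset (Fin n)) (hS : S.Nonempty),
      X i ∈ CvDag (X '' ↑S) → z i ≤ S.sup' hS z) ↔
    (∀ i : Fin n, X i ∉ CvDag (X '' {j : Fin n | z j < z i})) :=
  forall_congr' fun i =>
    forall_le_sup'_iff_not_strictLowerSet (P := fun S => X i ∈ CvDag (X '' S))
      (fun _ _ hST hx => CvDag_mono (Set.image_mono hST) hx) (by simp) z (z i)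
end

section
/- If the constraint set Q ⊆ ℝⁿ contains all constant vectors and is closed under coordinatewise maximum truncation (i.e., z ∈ Q implies the vector with coordinates min(max(z_i, −c), c) is in Q for every c > 0), then the unconstrained least squares minimizer over the quasiconvex function class with no bound equals the minimizer over the class bounded by Γ = max_i |Y_i|: argmin over all quasiconvex functions g of Σ(Y_i − g(X_i))² equals argmin over quasiconvex functions bounded by max_i|Y_i| of the same criterion. In particular, any LSE z over Q satisfies max_i |z_i| ≤ max_i |Y_i|. -/
/-!
Truncating a vector at a level `c ≥ max_i |Y_i|` moves every coordinate weakly closer to `Y`,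
and strictly closer in every coordinate with `|z_i| > c`. Hence a least squares fit over a
truncation-closed set never exceeds `max_i |Y_i|` in absolute value (otherwise truncating it
slightly above that level would lower the loss), and conversely a fit that is optimal among the
bounded candidates beats every candidate `w`, since it beats the truncation of `w`, which is
bounded and no worse than `w`.
-/

open Finset MeasureTheory

section Truncation

variable {c y z : ℝ}

lemma abs_min_max_neg_le (hc : 0 ≤ c) : |min (max z (-c)) c| ≤ c :=
  abs_le.mpr ⟨le_min (le_max_right _ _) (by linarith), min_le_right _ _⟩

lemma abs_sub_min_max_neg_le (hy : |y| ≤ c) : |y - min (max z (-c)) c| ≤ |y - z| := by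
  obtain ⟨hy₁, hy₂⟩ := abs_le.mp hy
  rcases le_or_gt z (-c) with hz | hz
  · rw [max_eq_right hz, min_eq_left (by linarith), abs_of_nonneg (by linarith),
      abs_of_nonneg (by linarith)]
    linarith
  rcases le_or_gt c z with hz' | hz'
  · rw [max_eq_left hz.le, min_eq_right hz', abs_of_nonpos (by linarith),
      abs_of_nonpos (by linarith)]
    linarith
  · rw [max_eq_left hz.le, min_eq_left hz'.le]

lemma abs_sub_min_max_neg_lt (hy : |y| ≤ c) (hz : c < |z|) :
    |y - min (max z (-c)) c| < |y - z| := by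
  obtain ⟨hy₁, hy₂⟩ := abs_le.mp hy
  rcases lt_abs.mp hz with hz | hz
  · rw [max_eq_left (by linarith), min_eq_right hz.le, abs_of_nonpos (by linarith),
      abs_of_nonpos (by linarith)]
    linarith
  · rw [max_eq_right (by linarith), min_eq_left (by linarith), abs_of_nonneg (by linarith),
      abs_of_nonneg (by linarith)]
    linarith

end Truncation

section LeastSquares

variable {ι : Type*} [Fintype ι] {Y z : ι → ℝ} {c : ℝ}

lemma sum_sq_sub_min_max_neg_le (hY : ∀ k, |Y k| ≤ c) (z : ι → ℝ) :
    ∑ k, (Y k - min (max (z k) (-c)) c) ^ 2 ≤ ∑ k, (Y k - z k) ^ 2 :=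
  sum_le_sum fun k _ => sq_le_sq.mpr (abs_sub_min_max_neg_le (hY k))

lemma sum_sq_sub_min_max_neg_lt (hY : ∀ k, |Y k| ≤ c) {i : ι} (hi : c < |z i|) :
    ∑ k, (Y k - min (max (z k) (-c)) c) ^ 2 < ∑ k, (Y k - z k) ^ 2 :=
  sum_lt_sum (fun k _ => sq_le_sq.mpr (abs_sub_min_max_neg_le (hY k)))
    ⟨i, mem_univ i, sq_lt_sq.mpr (abs_sub_min_max_neg_lt (hY i) hi)⟩

variable {Q : Set (ι → ℝ)} {Γ : ℝ}

lemma abs_le_of_forall_sum_sq_le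
    (htrunc : ∀ z ∈ Q, ∀ c : ℝ, 0 < c → (fun i => min (max (z i) (-c)) c) ∈ Q)
    (hY : ∀ k, |Y k| ≤ Γ) (hz : z ∈ Q)
    (hmin : ∀ w ∈ Q, ∑ k, (Y k - z k) ^ 2 ≤ ∑ k, (Y k - w k) ^ 2) (i : ι) :
    |z i| ≤ Γ := by
  by_contra! hi
  obtain ⟨c, hΓc, hcz⟩ := exists_between hi
  have hc : 0 < c := (abs_nonneg (Y i)).trans_lt ((hY i).trans_lt hΓc)
  exact (hmin _ (htrunc z hz c hc)).not_gt
    (sum_sq_sub_min_max_neg_lt (fun k => (hY k).trans hΓc.le) hcz)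

lemma forall_sum_sq_le_of_forall_bounded
    (htrunc : ∀ z ∈ Q, ∀ c : ℝ, 0 < c → (fun i => min (max (z i) (-c)) c) ∈ Q)
    (hY : ∀ k, |Y k| ≤ Γ) (hzΓ : ∀ i, |z i| ≤ Γ)
    (hmin : ∀ w ∈ Q, (∀ i, |w i| ≤ Γ) → ∑ k, (Y k - z k) ^ 2 ≤ ∑ k, (Y k - w k) ^ 2) :
    ∀ w ∈ Q, ∑ k, (Y k - z k) ^ 2 ≤ ∑ k, (Y k - w k) ^ 2 := by
  intro w hw
  rcases lt_or_ge 0 Γ with hΓ | hΓ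
  · exact (hmin _ (htrunc w hw Γ hΓ) fun i => abs_min_max_neg_le hΓ.le).trans
      (sum_sq_sub_min_max_neg_le hY w)
  · have hzY : ∀ k, Y k - z k = 0 := fun k => by
      rw [abs_nonpos_iff.mp ((hY k).trans hΓ),
        abs_nonpos_iff.mp ((hzΓ k).trans hΓ), sub_zero]
    calc ∑ k, (Y k - z k) ^ 2 = 0 := by simp [hzY]
      _ ≤ ∑ k, (Y k - w k) ^ 2 := sum_nonneg fun k _ => sq_nonneg _

end LeastSquares

theorem stmt_16_general (n : ℕ) (Q : Set (Fin n → ℝ)) (Y : Fin n → ℝ)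
    (htrunc : ∀ z ∈ Q, ∀ c : ℝ, 0 < c →
      (fun i => min (max (z i) (-c)) c) ∈ Q) :
    {z | z ∈ Q ∧ ∀ w ∈ Q, ∑ k, (Y k - z k) ^ 2 ≤ ∑ k, (Y k - w k) ^ 2} =
      {z | z ∈ Q ∧ (∀ i, |z i| ≤ ⨆ i, |Y i|) ∧
        ∀ w ∈ Q, (∀ i, |w i| ≤ ⨆ i, |Y i|) →
          ∑ k, (Y k - z k) ^ 2 ≤ ∑ k, (Y k - w k) ^ 2} ∧
    ∀ z ∈ Q, (∀ w ∈ Q, ∑ k, (Y k - z k) ^ 2 ≤ ∑ k, (Y k - w k) ^ 2) →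
      ∀ i, |z i| ≤ ⨆ i, |Y i| := by
  have hY : ∀ k, |Y k| ≤ ⨆ i, |Y i| := le_ciSup (Set.finite_range _).bddAbove
  refine ⟨Set.ext fun z => ⟨?_, ?_⟩, fun z hz => abs_le_of_forall_sum_sq_le htrunc hY hz⟩
  · rintro ⟨hz, hmin⟩
    exact ⟨hz, abs_le_of_forall_sum_sq_le htrunc hY hz hmin, fun w hw _ => hmin w hw⟩
  · rintro ⟨hz, hzΓ, hmin⟩
    exact ⟨hz, forall_sum_sq_le_of_forall_bounded htrunc hY hzΓ hmin⟩

theorem stmt_16 (n : ℕ) (hn : 0 < n) (Q : Set (Fin n → ℝ)) (Y : Fin n → ℝ)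
    (hconst : ∀ c : ℝ, (fun _ => c) ∈ Q)
    (htrunc : ∀ z ∈ Q, ∀ c : ℝ, 0 < c →
      (fun i => min (max (z i) (-c)) c) ∈ Q) :
    {z | z ∈ Q ∧ ∀ w ∈ Q, ∑ k, (Y k - z k) ^ 2 ≤ ∑ k, (Y k - w k) ^ 2} =
      {z | z ∈ Q ∧ (∀ i, |z i| ≤ ⨆ i, |Y i|) ∧
        ∀ w ∈ Q, (∀ i, |w i| ≤ ⨆ i, |Y i|) →
          ∑ k, (Y k - z k) ^ 2 ≤ ∑ k, (Y k - w k) ^ 2} ∧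
    ∀ z ∈ Q, (∀ w ∈ Q, ∑ k, (Y k - z k) ^ 2 ≤ ∑ k, (Y k - w k) ^ 2) →
      ∀ i, |z i| ≤ ⨆ i, |Y i| :=
  stmt_16_general n Q Y htrunc
end

section
/- Suppose X₁,…,Xₙ ∈ ℝ^d are distinct points lying on the set {x ∈ ℝ^d : x ≤ 0 coordinatewise and ‖x‖ = 1}. Then for every i ∈ [n] and S ⊆ [n] with i ∉ S, X_i ∉ Cv†({X_j : j ∈ S}); consequently the constraint set Q of restrictions of quasiconvex decreasing functions equals all of ℝⁿ. -/
open Finset MeasureTheory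

/-!
Each `X i` is a unit vector with nonpositive coordinates, so the open half-space
`{y | ⟪X i, y⟫ < 1}` is convex and closed under increasing coordinates. Since
`‖X i - X j‖² = 2 - 2⟪X i, X j⟫ > 0`, it contains every other `X j`, hence all of
`Cv†({X j | j ∈ S})` when `i ∉ S`, but not `X i` itself. So every constraint defining `Q`
has `i ∈ S` and holds for all `z`.
-/

lemma dotProduct_lt_one_of_ne {ι : Type*} [Fintype ι] {x y : ι → ℝ} (hx : x ⬝ᵥ x = 1)
    (hy : y ⬝ᵥ y = 1) (hxy : x ≠ y) : x ⬝ᵥ y < 1 := by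
  have hpos : 0 < (x - y) ⬝ᵥ (x - y) :=
    lt_of_le_of_ne (dotProduct_self_star_nonneg (x - y))
      (Ne.symm (dotProduct_self_eq_zero.not.mpr (sub_ne_zero.mpr hxy)))
  simp only [sub_dotProduct, dotProduct_sub, dotProduct_comm y x] at hpos
  linarith

lemma dotProduct_le_dotProduct_of_nonpos_of_le {ι : Type*} [Fintype ι] {v x y : ι → ℝ}
    (hv : v ≤ 0) (hxy : x ≤ y) : v ⬝ᵥ y ≤ v ⬝ᵥ x :=
  Finset.sum_le_sum fun k _ => mul_le_mul_of_nonpos_left (hxy k) (hv k)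

lemma dotProduct_lt_of_mem_cvDag {d : ℕ} {v : Fin d → ℝ} (hv : v ≤ 0) {A : Set (Fin d → ℝ)}
    {c : ℝ} (hA : ∀ a ∈ A, v ⬝ᵥ a < c) {y : Fin d → ℝ} (hy : y ∈ CvDag A) : v ⬝ᵥ y < c := by
  obtain ⟨x, hx, hxy⟩ := hy
  have hlin : IsLinearMap ℝ (v ⬝ᵥ ·) := ⟨dotProduct_add v, fun r w => dotProduct_smul r v w⟩
  have hxc : v ⬝ᵥ x < c := convexHull_min hA (convex_halfSpace_lt hlin c) hx
  exact (dotProduct_le_dotProduct_of_nonpos_of_le hv hxy).trans_lt hxc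

theorem stmt_18 (d n : ℕ) (X : Fin n → (Fin d → ℝ))
    (hinj : Function.Injective X)
    (hneg : ∀ j, X j ≤ 0)
    (hnorm : ∀ j, Real.sqrt (∑ i, (X j i) ^ 2) = 1) :
    (∀ (i : Fin n) (S : Finset (Fin n)), i ∉ S → X i ∉ CvDag (X '' ↑S)) ∧
    {z : Fin n → ℝ | ∀ (i : Fin n) (S : Finset (Fin n)) (hS : S.Nonempty),
        X i ∈ CvDag (X '' ↑S) → z i ≤ S.sup' hS z} = Set.univ := by
  have hunit : ∀ j, X j ⬝ᵥ X j = 1 := fun j => by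
    simpa [dotProduct, sq] using Real.sqrt_eq_one.mp (hnorm j)
  have hnot_mem : ∀ (i : Fin n) (S : Finset (Fin n)), i ∉ S → X i ∉ CvDag (X '' ↑S) := by
    intro i S hiS hmem
    have hlt : X i ⬝ᵥ X i < 1 := by
      refine dotProduct_lt_of_mem_cvDag (hneg i) ?_ hmem
      rintro _ ⟨j, hj, rfl⟩
      exact dotProduct_lt_one_of_ne (hunit i) (hunit j)
        (hinj.ne (ne_of_mem_of_not_mem hj hiS).symm)
    exact (hunit i).not_lt hlt
  refine ⟨hnot_mem, Set.eq_univ_of_forall fun z i S hS hmem => ?_⟩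
  by_contra hz
  exact hnot_mem i S (fun hi => hz (S.le_sup' z hi)) hmem
end
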